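/- Let d, n ≥ 1, M ≥ 0, ρ₉ ≥ 0, ρ₁₀ ≥ 0, and let ε > 0 and η > 0. Let V : ℝ^d × ℝ^d → M_n(ℂ) and V⁰ : ℝ^d → M_n(ℂ) be measurable with Frobenius norms bounded by M, and assume: (i) |V(x,ξ) − V(x',ξ)| ≤ ρ₉ and |V⁰(x) − V⁰(x')| ≤ ρ₉ for all ξ and all x, x' with |x − x'| ≤ √d · η; (ii) for every x ∈ ℝ^d and every γ ∈ ℤ^d: | (ε/η)^d ∫_{(η/ε)(γ + [0,1]^d)} V(x, ξ) dξ − V⁰(x) | ≤ ρ₁₀. Then for every γ ∈ ℤ^d: | η^{−d} ∫_{□_γ^η} ( V(x, x/ε) − V⁰(x) ) dx | ≤ 2 ρ₉ + ρ₁₀. -/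

import Mathlib

/-!
Freeze the slow variable at the corner `x₀ = η•γ` of the cell. Every point of `□_γ^η` lies within
`√d·η` of `x₀`, so replacing `V(x, x/ε)` by `V(x₀, x/ε)` and `V⁰(x)` by `V⁰(x₀)` costs `ρ₉` each.
After the substitution `ξ = x/ε`, the cell average of `V(x₀, x/ε)` is the mean of `V(x₀, ·)` over
`(η/ε)(γ + [0,1]^d)`, which is within `ρ₁₀` of `V⁰(x₀)`. Matrices are handled as vectors in
`EuclideanSpace ℂ (Fin n × Fin n)`, whose norm is the Frobenius norm.
-/

open MeasureTheory

noncomputable section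

/-- `ℝ^d` with its Euclidean structure. -/
abbrev Ed (d : ℕ) := EuclideanSpace ℝ (Fin d)

/-- The cell `η•γ + [0,η]^d` of the rescaled lattice `ηℤ^d`. -/
def cell (d : ℕ) (η : ℝ) (γ : Fin d → ℤ) : Set (Ed d) :=
  {x | ∀ i, η * γ i ≤ x i ∧ x i ≤ η * γ i + η}

/-- Frobenius norm of a complex `n × n` matrix. -/
def frob {n : ℕ} (A : Matrix (Fin n) (Fin n) ℂ) : ℝ :=
  Real.sqrt (∑ i, ∑ k, ‖A i k‖ ^ 2)

open scoped ENNReal Pointwise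

section Average

variable {X E : Type*} [MeasurableSpace X] [NormedAddCommGroup E] [NormedSpace ℝ E]
  {μ : Measure X} {s : Set X}

theorem MeasureTheory.average_sub {f g : X → E} (hf : Integrable f μ) (hg : Integrable g μ) :
    ⨍ x, (f x - g x) ∂μ = ⨍ x, f x ∂μ - ⨍ x, g x ∂μ :=
  integral_sub hf.to_average hg.to_average

theorem MeasureTheory.norm_setAverage_le_of_norm_le (hs₀ : μ s ≠ 0) (hs : μ s ≠ ∞)
    {f : X → E} {C : ℝ} (hC : ∀ x ∈ s, ‖f x‖ ≤ C) : ‖⨍ x in s, f x ∂μ‖ ≤ C := by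
  have hpos : 0 < μ.real s := ENNReal.toReal_pos hs₀ hs
  rw [setAverage_eq, norm_smul, Real.norm_of_nonneg (inv_nonneg.2 hpos.le),
    inv_mul_le_iff₀ hpos, mul_comm]
  exact norm_setIntegral_le_of_norm_le_const hs.lt_top hC

theorem MeasureTheory.norm_setAverage_sub_le [CompleteSpace E] (hs₀ : μ s ≠ 0) (hs : μ s ≠ ∞)
    {F F' G : X → E} {c : E} {ρ ρ' : ℝ} (hF : IntegrableOn F s μ) (hF' : IntegrableOn F' s μ)
    (hG : IntegrableOn G s μ) (hFF' : ∀ x ∈ s, ‖F x - F' x‖ ≤ ρ)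
    (hGc : ∀ x ∈ s, ‖c - G x‖ ≤ ρ) (hF'c : ‖(⨍ x in s, F' x ∂μ) - c‖ ≤ ρ') :
    ‖⨍ x in s, (F x - G x) ∂μ‖ ≤ 2 * ρ + ρ' := by
  have hc : ⨍ _x in s, c ∂μ = c := setAverage_const hs₀ hs c
  have hsplit : ⨍ x in s, (F x - G x) ∂μ =
      ⨍ x in s, (F x - F' x) ∂μ + ((⨍ x in s, F' x ∂μ) - c) + ⨍ x in s, (c - G x) ∂μ := by
    rw [average_sub hF hG, average_sub hF hF', average_sub (integrableOn_const (C := c) hs) hG, hc]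
    abel
  rw [hsplit]
  have h₁ := norm_setAverage_le_of_norm_le hs₀ hs hFF'
  have h₃ := norm_setAverage_le_of_norm_le hs₀ hs hGc
  calc _ ≤ _ := norm_add₃_le
    _ ≤ 2 * ρ + ρ' := by linarith

end Average

theorem MeasureTheory.Measure.setAverage_comp_smul {E F : Type*} [NormedAddCommGroup E]
    [NormedSpace ℝ E] [MeasurableSpace E] [BorelSpace E] [FiniteDimensional ℝ E] (μ : Measure E)
    [μ.IsAddHaarMeasure] [NormedAddCommGroup F] [NormedSpace ℝ F] (f : E → F) {c : ℝ}
    (hc : c ≠ 0) (s : Set E) :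
    ⨍ x in s, f (c • x) ∂μ = ⨍ y in c • s, f y ∂μ := by
  rw [setAverage_eq, setAverage_eq, Measure.setIntegral_comp_smul μ f s hc, smul_smul,
    measureReal_def, measureReal_def, Measure.addHaar_smul, ENNReal.toReal_mul,
    ENNReal.toReal_ofReal (abs_nonneg _), abs_inv, mul_inv, mul_comm]

section Frobenius

variable {m n : Type*}

def Matrix.toEuclideanSpace (A : Matrix m n ℂ) : EuclideanSpace ℂ (m × n) :=
  WithLp.toLp 2 fun pq => A pq.1 pq.2

@[simp]
theorem Matrix.toEuclideanSpace_apply (A : Matrix m n ℂ) (pq : m × n) :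
    A.toEuclideanSpace pq = A pq.1 pq.2 := rfl

theorem Matrix.toEuclideanSpace_sub (A B : Matrix m n ℂ) :
    (A - B).toEuclideanSpace = A.toEuclideanSpace - B.toEuclideanSpace := rfl

theorem frob_eq_norm_toEuclideanSpace {k : ℕ} (A : Matrix (Fin k) (Fin k) ℂ) :
    frob A = ‖A.toEuclideanSpace‖ := by
  rw [frob, EuclideanSpace.norm_eq, Fintype.sum_prod_type]
  rfl

theorem Matrix.measurable_toEuclideanSpace {α : Type*} [MeasurableSpace α]
    {f : α → Matrix m n ℂ} (hf : ∀ p q, Measurable fun a => f a p q) :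
    Measurable fun a => (f a).toEuclideanSpace :=
  (WithLp.measurable_toLp 2 _).comp (measurable_pi_lambda _ fun pq => hf pq.1 pq.2)

theorem Matrix.toEuclideanSpace_setAverage [Fintype m] [Fintype n] {X : Type*}
    [MeasurableSpace X] {μ : Measure X} {s : Set X} {f : X → Matrix m n ℂ}
    (hf : IntegrableOn (fun x => (f x).toEuclideanSpace) s μ) :
    (Matrix.of fun p q => (μ.real s : ℂ)⁻¹ * ∫ x in s, f x p q ∂μ).toEuclideanSpace =
      ⨍ x in s, (f x).toEuclideanSpace ∂μ := by
  ext pq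
  have h := (EuclideanSpace.proj (𝕜 := ℂ) pq).integral_comp_comm hf
  simp only [PiLp.proj_apply, Matrix.toEuclideanSpace_apply] at h
  rw [setAverage_eq, PiLp.smul_apply, ← h, Complex.real_smul, Complex.ofReal_inv]
  rfl

theorem integrableOn_toEuclideanSpace_of_frob_le {k : ℕ} {X : Type*} [MeasurableSpace X]
    {μ : Measure X} {s : Set X} (hs : μ s ≠ ∞) {f : X → Matrix (Fin k) (Fin k) ℂ}
    (hf : ∀ p q, Measurable fun x => f x p q) {M : ℝ} (hM : ∀ x, frob (f x) ≤ M) :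
    IntegrableOn (fun x => (f x).toEuclideanSpace) s μ :=
  Measure.integrableOn_of_bounded hs (Matrix.measurable_toEuclideanSpace hf).aestronglyMeasurable
    (ae_of_all _ fun x => frob_eq_norm_toEuclideanSpace (f x) ▸ hM x)

end Frobenius

theorem cell_eq_preimage (d : ℕ) (η : ℝ) (γ : Fin d → ℤ) :
    cell d η γ = (MeasurableEquiv.toLp 2 (Fin d → ℝ)).symm ⁻¹'
      Set.univ.pi fun i => Set.Icc (η * γ i) (η * γ i + η) := by
  ext x
  simp only [cell, Set.mem_ofPred_eq, Set.mem_preimage, Set.mem_univ_pi, Set.mem_Icc]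
  rfl

theorem volume_cell (d : ℕ) (η : ℝ) (γ : Fin d → ℤ) :
    volume (cell d η γ) = ENNReal.ofReal η ^ d := by
  rw [cell_eq_preimage,
    (EuclideanSpace.volume_preserving_symm_measurableEquiv_toLp (Fin d)).measure_preimage_equiv,
    volume_pi_pi]
  simp [Real.volume_Icc]

theorem measureReal_cell (d : ℕ) {η : ℝ} (hη : 0 ≤ η) (γ : Fin d → ℤ) :
    volume.real (cell d η γ) = η ^ d := by
  simp [measureReal_def, volume_cell, hη]

theorem smul_cell {d : ℕ} {c : ℝ} (hc : 0 < c) (η : ℝ) (γ : Fin d → ℤ) :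
    c • cell d η γ = cell d (c * η) γ := by
  ext y
  rw [Set.mem_smul_set_iff_inv_smul_mem₀ hc.ne']
  refine forall_congr' fun i => ?_
  rw [PiLp.smul_apply, smul_eq_mul, le_inv_mul_iff₀ hc, inv_mul_le_iff₀ hc, mul_add,
    mul_assoc]

theorem dist_le_of_mem_cell {d : ℕ} {η : ℝ} (hη : 0 ≤ η) {γ : Fin d → ℤ} {x : Ed d}
    (hx : x ∈ cell d η γ) : dist x (WithLp.toLp 2 fun i => η * γ i) ≤ Real.sqrt d * η := by
  have hcoord : ∀ i, dist (x i) (η * γ i) ^ 2 ≤ η ^ 2 := fun i => by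
    rw [Real.dist_eq, sq_abs]
    nlinarith [hx i]
  calc dist x (WithLp.toLp 2 fun i => η * γ i)
      = Real.sqrt (∑ i, dist (x i) (η * γ i) ^ 2) := EuclideanSpace.dist_eq _ _
    _ ≤ Real.sqrt (∑ _i : Fin d, η ^ 2) := Real.sqrt_le_sqrt (Finset.sum_le_sum fun i _ => hcoord i)
    _ = Real.sqrt d * η := by
      rw [Finset.sum_const, Finset.card_univ, Fintype.card_fin, nsmul_eq_mul,
        Real.sqrt_mul (Nat.cast_nonneg d), Real.sqrt_sq hη]

theorem setAverage_cell_comp_inv_smul {F : Type*} [NormedAddCommGroup F] [NormedSpace ℝ F]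
    {d : ℕ} {ε : ℝ} (hε : 0 < ε) (η : ℝ) (γ : Fin d → ℤ) (f : Ed d → F) :
    ⨍ x in cell d η γ, f (ε⁻¹ • x) = ⨍ ξ in cell d (η / ε) γ, f ξ := by
  rw [Measure.setAverage_comp_smul volume f (inv_ne_zero hε.ne'), smul_cell (inv_pos.2 hε),
    inv_mul_eq_div]

theorem stmt_17_general (d n : ℕ)
    (M ρ₉ ρ₁₀ ε η : ℝ)
    (hε : 0 < ε) (hη : 0 < η)
    (V : Ed d → Ed d → Matrix (Fin n) (Fin n) ℂ)
    (V₀ : Ed d → Matrix (Fin n) (Fin n) ℂ)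
    (hmeasV : ∀ p q, Measurable fun xy : Ed d × Ed d => V xy.1 xy.2 p q)
    (hmeasV₀ : ∀ p q, Measurable fun x => V₀ x p q)
    (hbdV : ∀ x ξ : Ed d, frob (V x ξ) ≤ M)
    (hbdV₀ : ∀ x : Ed d, frob (V₀ x) ≤ M)
    (hcontV : ∀ (ξ x x' : Ed d), dist x x' ≤ Real.sqrt d * η →
      frob (V x ξ - V x' ξ) ≤ ρ₉)
    (hcontV₀ : ∀ (x x' : Ed d), dist x x' ≤ Real.sqrt d * η →
      frob (V₀ x - V₀ x') ≤ ρ₉)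
    (hmean : ∀ (x : Ed d) (γ : Fin d → ℤ),
      frob (fun p q =>
          ((ε / η : ℝ) : ℂ) ^ d * (∫ ξ in cell d (η / ε) γ, V x ξ p q)
            - V₀ x p q) ≤ ρ₁₀) :
    ∀ γ : Fin d → ℤ,
      frob (fun p q => ((η : ℂ) ^ d)⁻¹ *
          ∫ x in cell d η γ, (V x (ε⁻¹ • x) p q - V₀ x p q))
        ≤ 2 * ρ₉ + ρ₁₀ := by
  intro γ
  set s := cell d η γ
  set s' := cell d (η / ε) γ
  set x₀ : Ed d := WithLp.toLp 2 fun i => η * γ i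
  have hs₀ : volume s ≠ 0 := by simp [s, volume_cell, hη]
  have hs : volume s ≠ ∞ := by simp [s, volume_cell]
  have hs' : volume s' ≠ ∞ := by simp [s', volume_cell]
  have hmeasV_fast : ∀ y : Ed d, ∀ p q, Measurable fun x : Ed d => V y x p q := fun y p q =>
    (hmeasV p q).comp (measurable_const.prodMk measurable_id)
  have hF : IntegrableOn (fun x => (V x (ε⁻¹ • x)).toEuclideanSpace) s :=
    integrableOn_toEuclideanSpace_of_frob_le hs (fun p q => (hmeasV p q).comp
      (measurable_id.prodMk (measurable_const_smul ε⁻¹))) fun x => hbdV x (ε⁻¹ • x)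
  have hF' : IntegrableOn (fun x => (V x₀ (ε⁻¹ • x)).toEuclideanSpace) s :=
    integrableOn_toEuclideanSpace_of_frob_le hs (fun p q => (hmeasV_fast x₀ p q).comp
      (measurable_const_smul ε⁻¹)) fun x => hbdV x₀ (ε⁻¹ • x)
  have hG := integrableOn_toEuclideanSpace_of_frob_le hs hmeasV₀ hbdV₀
  have hI := integrableOn_toEuclideanSpace_of_frob_le hs' (hmeasV_fast x₀) (hbdV x₀)
  rw [show ((η : ℂ) ^ d)⁻¹ = ((volume.real s : ℝ) : ℂ)⁻¹ by
    rw [measureReal_cell d hη.le]; push_cast; rfl]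
  refine ((frob_eq_norm_toEuclideanSpace _).trans (congrArg norm
    (Matrix.toEuclideanSpace_setAverage (f := fun x => V x (ε⁻¹ • x) - V₀ x)
      (hF.sub hG)))).trans_le ?_
  simp only [Matrix.toEuclideanSpace_sub]
  refine norm_setAverage_sub_le hs₀ hs hF hF' hG (c := (V₀ x₀).toEuclideanSpace)
    (fun x hx => ?_) (fun x hx => ?_) ?_
  · rw [← Matrix.toEuclideanSpace_sub, ← frob_eq_norm_toEuclideanSpace]
    exact hcontV _ _ _ (dist_le_of_mem_cell hη.le hx)
  · rw [← Matrix.toEuclideanSpace_sub, ← frob_eq_norm_toEuclideanSpace]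
    exact hcontV₀ _ _ (dist_comm x x₀ ▸ dist_le_of_mem_cell hη.le hx)
  · have hvol' : ((ε / η : ℝ) : ℂ) ^ d = ((volume.real s' : ℝ) : ℂ)⁻¹ := by
      rw [measureReal_cell d (div_nonneg hη.le hε.le)]
      push_cast
      rw [← inv_pow, inv_div]
    have h : frob (Matrix.of (fun p q => ((volume.real s' : ℝ) : ℂ)⁻¹ * ∫ ξ in s', V x₀ ξ p q)
        - V₀ x₀) ≤ ρ₁₀ := hvol' ▸ hmean x₀ γ
    rw [setAverage_cell_comp_inv_smul hε η γ fun ξ => (V x₀ ξ).toEuclideanSpace,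
      ← Matrix.toEuclideanSpace_setAverage hI]
    rwa [frob_eq_norm_toEuclideanSpace, Matrix.toEuclideanSpace_sub] at h

/-- Cell-average estimate (5.31) and following, of the locally
almost periodic example (Section 3.5): if `V(·,ξ)` and `V⁰` have modulus of
continuity `ρ₉` at scale `√d·η` and the means of `V(x,·)` over all cubes
`(η/ε)(γ + [0,1]^d)` approximate `V⁰(x)` up to `ρ₁₀`, then the average of
`V(x, x/ε) − V⁰(x)` over any cell `□_γ^η` is at most `2ρ₉ + ρ₁₀`. -/
theorem stmt_17 (d n : ℕ) (hd : 1 ≤ d) (hn : 1 ≤ n)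
    (M ρ₉ ρ₁₀ ε η : ℝ)
    (hM : 0 ≤ M) (h9 : 0 ≤ ρ₉) (h10 : 0 ≤ ρ₁₀) (hε : 0 < ε) (hη : 0 < η)
    (V : Ed d → Ed d → Matrix (Fin n) (Fin n) ℂ)
    (V₀ : Ed d → Matrix (Fin n) (Fin n) ℂ)
    (hmeasV : ∀ p q, Measurable fun xy : Ed d × Ed d => V xy.1 xy.2 p q)
    (hmeasV₀ : ∀ p q, Measurable fun x => V₀ x p q)
    (hbdV : ∀ x ξ : Ed d, frob (V x ξ) ≤ M)
    (hbdV₀ : ∀ x : Ed d, frob (V₀ x) ≤ M)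
    (hcontV : ∀ (ξ x x' : Ed d), dist x x' ≤ Real.sqrt d * η →
      frob (V x ξ - V x' ξ) ≤ ρ₉)
    (hcontV₀ : ∀ (x x' : Ed d), dist x x' ≤ Real.sqrt d * η →
      frob (V₀ x - V₀ x') ≤ ρ₉)
    (hmean : ∀ (x : Ed d) (γ : Fin d → ℤ),
      frob (fun p q =>
          ((ε / η : ℝ) : ℂ) ^ d * (∫ ξ in cell d (η / ε) γ, V x ξ p q)
            - V₀ x p q) ≤ ρ₁₀) :
    ∀ γ : Fin d → ℤ,
      frob (fun p q => ((η : ℂ) ^ d)⁻¹ *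
          ∫ x in cell d η γ, (V x (ε⁻¹ • x) p q - V₀ x p q))
        ≤ 2 * ρ₉ + ρ₁₀ :=
  stmt_17_general d n M ρ₉ ρ₁₀ ε η hε hη V V₀ hmeasV hmeasV₀ hbdV hbdV₀ hcontV hcontV₀ hmean

end
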